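/- arXiv:1604.00528 — 3 statements merged into one kernel-verified Lean document; each statement's English description precedes it below -/
import Mathlib

section
/- Let h ⊆ g₂* be an indecomposable Lie subalgebra whose representation on V is not irreducible. Then the socle of V as h-module, i.e. the sum of all irreducible h-invariant subspaces of V, is an isotropic subspace of V. -/
noncomputable section

open scoped Matrix

attribute [local instance 100] LieRing.ofAssociativeRing

abbrev V7 : Type := Fin 7 → ℝ
abbrev M7 : Type := Matrix (Fin 7) (Fin 7) ℝ
abbrev M2 : Type := Matrix (Fin 2) (Fin 2) ℝ

/-- standard basis vectors of `V7` -/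
def stdB (i : Fin 7) : V7 := Pi.single i 1

/-- the symmetric bilinear form of signature (4,3):
`⟨x,y⟩ = x₁y₅ + x₅y₁ + x₂y₆ + x₆y₂ + x₃y₇ + x₇y₃ − x₄y₄` (1-indexed). -/
def bform (x y : V7) : ℝ :=
  x 0 * y 4 + x 4 * y 0 + x 1 * y 5 + x 5 * y 1 + x 2 * y 6 + x 6 * y 2 - x 3 * y 3

/-- `e^i ∧ e^j ∧ e^k` evaluated on a triple of vectors. -/
def wedge3 (i j k : Fin 7) (u v w : V7) : ℝ :=
  u i * (v j * w k - v k * w j) - u j * (v i * w k - v k * w i)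
    + u k * (v i * w j - v j * w i)

/-- the generic 3-form
`ω₀ = √2(e¹∧e⁶∧e⁷ + e²∧e³∧e⁵) − e⁴∧(e¹∧e⁵ − e²∧e⁶ − e³∧e⁷)` (1-indexed). -/
def omega0 (u v w : V7) : ℝ :=
  Real.sqrt 2 * (wedge3 0 5 6 u v w + wedge3 1 2 4 u v w)
    - (wedge3 3 0 4 u v w - wedge3 3 1 5 u v w - wedge3 3 2 6 u v w)

/-- membership in `g₂*` -/
def inG2 (X : M7) : Prop :=
  ∀ u v w : V7,
    omega0 (X.mulVec u) v w + omega0 u (X.mulVec v) w + omega0 u v (X.mulVec w) = 0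

def InvariantUnder (h : LieSubalgebra ℝ M7) (U : Submodule ℝ V7) : Prop :=
  ∀ X ∈ h, ∀ v ∈ U, X.mulVec v ∈ U

def IsIsotropic (U : Submodule ℝ V7) : Prop :=
  ∀ u ∈ U, ∀ u' ∈ U, bform u u' = 0

def IsNondeg (U : Submodule ℝ V7) : Prop :=
  ∀ u ∈ U, (∀ u' ∈ U, bform u u' = 0) → u = 0

def IsIndecomposable (h : LieSubalgebra ℝ M7) : Prop :=
  ∀ U : Submodule ℝ V7, InvariantUnder h U → U ≠ ⊥ → U ≠ ⊤ → ¬ IsNondeg U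

def IsIrreducibleSub (h : LieSubalgebra ℝ M7) (U : Submodule ℝ V7) : Prop :=
  InvariantUnder h U ∧ U ≠ ⊥ ∧
    ∀ W : Submodule ℝ V7, InvariantUnder h W → W ≤ U → W = ⊥ ∨ W = U

/-- the socle: sum of all irreducible invariant subspaces -/
def socleV (h : LieSubalgebra ℝ M7) : Submodule ℝ V7 :=
  sSup {U | IsIrreducibleSub h U}

def sqrt2 : ℝ := Real.sqrt 2

/-- the matrix `h(A,v,u,y)` of the Type I normal form -/
def hImat (A : M2) (v : ℝ) (u y : Fin 2 → ℝ) : M7 :=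
  !![A.trace, -u 1, u 0, sqrt2 * v, 0, -y 0, -y 1;
     0, A 0 0, A 0 1, sqrt2 * u 0, y 0, 0, v;
     0, A 1 0, A 1 1, sqrt2 * u 1, y 1, -v, 0;
     0, 0, 0, 0, sqrt2 * v, sqrt2 * u 0, sqrt2 * u 1;
     0, 0, 0, 0, -A.trace, 0, 0;
     0, 0, 0, 0, u 1, -A 0 0, -A 1 0;
     0, 0, 0, 0, -u 0, -A 0 1, -A 1 1]

def hIset : Set M7 := {X | ∃ A v u y, X = hImat A v u y}

def mSet : Set M7 := {X | ∃ v u y, X = hImat 0 v u y}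

def hsSet : Set M7 := {X | ∃ A v y, X = hImat A v 0 y}

/-- a basis realizing the Type I normal form -/
def TypeIBasis (b : Module.Basis (Fin 7) ℝ V7) : Prop :=
  (∀ i j, bform (b i) (b j) = bform (stdB i) (stdB j)) ∧
  (∀ i j k, omega0 (b i) (b j) (b k) = omega0 (stdB i) (stdB j) (stdB k))

/-- the matrix of (the endomorphism given by) `X` with respect to the basis `b` -/
def matrixWrt (b : Module.Basis (Fin 7) ℝ V7) (X : M7) : M7 :=
  LinearMap.toMatrix b b X.mulVecLin

def matSet (b : Module.Basis (Fin 7) ℝ V7) (h : LieSubalgebra ℝ M7) : Set M7 :=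
  matrixWrt b '' (h : Set M7)

/-- the space `K(S)` of algebraic curvature maps with values in `S` -/
def curvSet (S : Set M7) : Set (V7 →ₗ[ℝ] V7 →ₗ[ℝ] M7) :=
  {R | (∀ x, R x x = 0) ∧ (∀ x y, R x y ∈ S) ∧
    ∀ x y z, (R x y).mulVec z + (R y z).mulVec x + (R z x).mulVec y = 0}

/-- `h` is a Berger algebra -/
def IsBerger (h : LieSubalgebra ℝ M7) : Prop :=
  h.toSubmodule =
    Submodule.span ℝ {X | ∃ R ∈ curvSet (h : Set M7), ∃ x y : V7, X = R x y}

def Cmat (a : ℝ) : M2 := !![a, -1; 1, a]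
def Smat : M2 := !![1, 1; 0, 1]
def Nmat : M2 := !![0, 1; 0, 0]
def Dmat (μ : ℝ) : M2 := !![1, 0; 0, μ]
def diagSet : Set M2 := {A | ∃ a d : ℝ, A = !![a, 0; 0, d]}
def u1Set : Set M2 := {A | ∃ a b : ℝ, A = !![a, -b; b, a]}
def b2Set : Set M2 := {A | A 1 0 = 0}
def b2hatSet : Set M2 := {A | ∃ s t : ℝ, A = s • (1 : M2) + t • Nmat}
def sLamSet (lam : ℝ) : Set M2 :=
  {A | ∃ s t : ℝ, A = s • !![lam, 0; 0, lam - 1] + t • Nmat}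
def slSet : Set M2 := {A | A.trace = 0}
def spanLine (X : M2) : Set M2 := {A | ∃ t : ℝ, A = t • X}

/-- the projection `h(A,v,u,y) ↦ A` applied to a subset of `h^I` -/
def aprojI (S : Set M7) : Set M2 := {A | ∃ v u y, hImat A v u y ∈ S}

/-- `a ⋉ m` inside `h^I` -/
def semidirI (aS : Set M2) : Set M7 :=
  {X | ∃ A ∈ aS, ∃ v u y, X = hImat A v u y}

def bformII (x y : V7) : ℝ :=
  x 0 * y 5 + x 5 * y 0 + x 1 * y 6 + x 6 * y 1 + x 2 * y 4 + x 4 * y 2 - x 3 * y 3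

def omegaII (u v w : V7) : ℝ :=
  Real.sqrt 2 * (-(wedge3 0 4 6 u v w) + wedge3 1 2 5 u v w)
    - (wedge3 3 0 5 u v w - wedge3 3 1 6 u v w - wedge3 3 2 4 u v w)

/-- a basis realizing the Type II normal form -/
def TypeIIBasis (b : Module.Basis (Fin 7) ℝ V7) : Prop :=
  (∀ i j, bform (b i) (b j) = bformII (stdB i) (stdB j)) ∧
  (∀ i j k, omega0 (b i) (b j) (b k) = omegaII (stdB i) (stdB j) (stdB k))

def sigmaMat (z : Fin 4 → ℝ) : Matrix (Fin 2) (Fin 3) ℝ :=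
  !![z 1, sqrt2 * z 2, z 3; z 0, sqrt2 * z 1, z 2]

def rhoMat (A : M2) : Matrix (Fin 3) (Fin 3) ℝ :=
  !![A 0 0 - A 1 1, -(sqrt2 * A 0 1), 0;
     -(sqrt2 * A 1 0), 0, -(sqrt2 * A 0 1);
     0, -(sqrt2 * A 1 0), -(A 0 0) + A 1 1]

/-- the matrix `h(A,z,c)` of the Type II normal form -/
def hIImat (A : M2) (z : Fin 4 → ℝ) (c : ℝ) : M7 :=
  !![A 0 0, A 0 1, z 1, sqrt2 * z 2, z 3, 0, -c;
     A 1 0, A 1 1, z 0, sqrt2 * z 1, z 2, c, 0;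
     0, 0, A 0 0 - A 1 1, -(sqrt2 * A 0 1), 0, -z 3, -z 2;
     0, 0, -(sqrt2 * A 1 0), 0, -(sqrt2 * A 0 1), sqrt2 * z 2, sqrt2 * z 1;
     0, 0, 0, -(sqrt2 * A 1 0), -(A 0 0) + A 1 1, -z 1, -z 0;
     0, 0, 0, 0, 0, -(A 0 0), -(A 1 0);
     0, 0, 0, 0, 0, -(A 0 1), -(A 1 1)]

def hIIset : Set M7 := {X | ∃ A z c, X = hIImat A z c}

def nSet : Set M7 := {X | ∃ z c, X = hIImat 0 z c}

/-- the projection `h(A,z,c) ↦ A` applied to a subset of `h^II` -/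
def aprojII (S : Set M7) : Set M2 := {A | ∃ z c, hIImat A z c ∈ S}

/-- `a ⋉ n₁` inside `h^II`, for `n₁ = {h(0,z,c) : z ∈ Z, c ∈ ℝ}` -/
def semidirII (aS : Set M2) (Z : Set (Fin 4 → ℝ)) : Set M7 :=
  {X | ∃ A ∈ aS, ∃ z ∈ Z, ∃ c : ℝ, X = hIImat A z c}

/-- `ℝ·h(A₀,z₀,0) + {h(0,z,c) : z ∈ Z, c ∈ ℝ}` inside `h^II` -/
def affSemiII (A0 : M2) (z0 : Fin 4 → ℝ) (Z : Set (Fin 4 → ℝ)) : Set M7 :=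
  {X | ∃ t : ℝ, ∃ z ∈ Z, ∃ c : ℝ, X = hIImat (t • A0) (t • z0 + z) c}

/-- the space of `z ∈ ℝ⁴` supported on the index set `s` -/
def nZ (s : Set (Fin 4)) : Set (Fin 4 → ℝ) := {z | ∀ l, l ∉ s → z l = 0}

abbrev Poly2 := MvPolynomial (Fin 2) ℝ
def Px : Poly2 := MvPolynomial.X 0
def Py : Poly2 := MvPolynomial.X 1

/-- the `GL(2,ℝ)`-action `(A·p)(x,y) = p((x,y)A)` on polynomials -/
def polyAct (A : M2) (p : Poly2) : Poly2 :=
  MvPolynomial.aeval (fun i => A 0 i • Px + A 1 i • Py) p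

/-- projective equivalence of polynomials -/
def ProjEquiv (p q : Poly2) : Prop :=
  ∃ A : M2, IsUnit A ∧ ∃ c : ℝ, c ≠ 0 ∧ polyAct A p = c • q

/-!
Since `g₂* ⊆ so(4,3)`, the orthogonal complement of an `h`-invariant subspace is again invariant.
For an irreducible `U` the radical `U ∩ U^⊥` is therefore `0` or `U`; the first case would make
`U` a proper nondegenerate invariant subspace, so `U` is isotropic. For two irreducible `U`, `W`
the same dichotomy applies to `U ∩ W^⊥` and `W ∩ U^⊥`. If both vanish, `U` and `W` are in duality,
so `U ⊕ W` is nondegenerate of even dimension `2 dim U`, hence a proper nondegenerate invariant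
subspace of the `7`-dimensional `V`, which is impossible. So the irreducible subspaces are
pairwise orthogonal and isotropic, and so is their sum.
-/

namespace LinearMap.BilinForm

open Module

variable {K V : Type*} [Field K] [AddCommGroup V] [Module K V] {B : LinearMap.BilinForm K V}

theorem le_orthogonal_comm (hB : B.IsRefl) {U W : Submodule K V} :
    U ≤ B.orthogonal W ↔ W ≤ B.orthogonal U :=
  ⟨fun h _ hw _ hu => hB _ _ (h hu _ hw), fun h _ hu _ hw => hB _ _ (h hw _ hu)⟩

theorem sSup_le_orthogonal_sSup (hB : B.IsRefl) {S : Set (Submodule K V)}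
    (hS : ∀ U ∈ S, ∀ W ∈ S, U ≤ B.orthogonal W) : sSup S ≤ B.orthogonal (sSup S) :=
  sSup_le fun U hU => (le_orthogonal_comm hB).2 <| sSup_le fun W hW => hS W hW U hU

theorem finrank_le_finrank_of_disjoint_orthogonal [FiniteDimensional K V]
    {U W : Submodule K V} (h : Disjoint W (B.orthogonal U)) : finrank K W ≤ finrank K U := by
  have hU := finrank_add_finrank_orthogonal' (B := B) U
  have hW := Submodule.finrank_add_finrank_le_of_disjoint h
  omega

theorem finrank_sup_eq_two_mul_of_disjoint_orthogonal [FiniteDimensional K V]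
    {U W : Submodule K V} (hW : W ≤ B.orthogonal W)
    (hUW : Disjoint U (B.orthogonal W)) (hWU : Disjoint W (B.orthogonal U)) :
    finrank K ↥(U ⊔ W) = 2 * finrank K U := by
  have hle := finrank_le_finrank_of_disjoint_orthogonal hWU
  have hge := finrank_le_finrank_of_disjoint_orthogonal hUW
  have hsum := Submodule.finrank_sup_add_finrank_inf_eq U W
  rw [(hUW.mono_right hW).eq_bot, finrank_bot] at hsum
  omega

theorem disjoint_sup_orthogonal_sup {U W : Submodule K V}
    (hU : U ≤ B.orthogonal U) (hW : W ≤ B.orthogonal W)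
    (hUW : Disjoint U (B.orthogonal W)) (hWU : Disjoint W (B.orthogonal U)) :
    Disjoint (U ⊔ W) (B.orthogonal (U ⊔ W)) := by
  rw [Submodule.disjoint_def]
  intro x hx hxo
  obtain ⟨a, ha, b, hb, rfl⟩ := Submodule.mem_sup.1 hx
  have ha0 : a = 0 := by
    refine Submodule.disjoint_def.1 hUW a ha fun w hw => ?_
    have := hxo w (Submodule.mem_sup_right hw)
    rwa [map_add, hW hb w hw, add_zero] at this
  have hb0 : b = 0 := by
    refine Submodule.disjoint_def.1 hWU b hb fun u hu => ?_
    have := hxo u (Submodule.mem_sup_left hu)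
    rwa [map_add, hU ha u hu, zero_add] at this
  rw [ha0, hb0, add_zero]

end LinearMap.BilinForm

lemma bform_comm (x y : V7) : bform x y = bform y x := by
  unfold bform; ring

def bformBilin : LinearMap.BilinForm ℝ V7 :=
  LinearMap.mk₂ ℝ bform
    (fun _ _ _ => by simp only [bform, Pi.add_apply]; ring)
    (fun _ _ _ => by simp only [bform, Pi.smul_apply, smul_eq_mul]; ring)
    (fun _ _ _ => by simp only [bform, Pi.add_apply]; ring)
    (fun _ _ _ => by simp only [bform, Pi.smul_apply, smul_eq_mul]; ring)

@[simp]
lemma bformBilin_apply (x y : V7) : bformBilin x y = bform x y := rfl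

lemma bformBilin_isRefl : bformBilin.IsRefl := fun x y h => by
  rwa [bformBilin_apply, bform_comm] at h

lemma isIsotropic_iff_le_orthogonal {U : Submodule ℝ V7} :
    IsIsotropic U ↔ U ≤ bformBilin.orthogonal U :=
  ⟨fun h _ hx _ hn => h _ hn _ hx, fun h _ hu _ hu' => h hu' _ hu⟩

lemma isNondeg_iff_disjoint_orthogonal {U : Submodule ℝ V7} :
    IsNondeg U ↔ Disjoint U (bformBilin.orthogonal U) := by
  simp only [IsNondeg, Submodule.disjoint_def, LinearMap.BilinForm.mem_orthogonal_iff,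
    bformBilin_apply, bform_comm _ (_ : V7)]

lemma stdB_apply (i j : Fin 7) : stdB i j = if j = i then 1 else 0 := Pi.single_apply ..

lemma mulVec_stdB_apply (X : M7) (i j : Fin 7) : (X *ᵥ stdB j) i = X i j := by
  simp [stdB, Matrix.mulVec_single]

lemma mulVec_apply_fin_seven (X : M7) (u : V7) (i : Fin 7) : (X *ᵥ u) i =
    X i 0 * u 0 + X i 1 * u 1 + X i 2 * u 2 + X i 3 * u 3 + X i 4 * u 4 + X i 5 * u 5
      + X i 6 * u 6 := by
  simp [Matrix.mulVec, dotProduct, Fin.sum_univ_seven]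

theorem inG2.bform_skew {X : M7} (hX : inG2 X) (u v : V7) :
    bform (X *ᵥ u) v + bform u (X *ᵥ v) = 0 := by
  have hs : √2 * √2 = 2 := Real.mul_self_sqrt zero_le_two
  have E (i j k : Fin 7) := hX (stdB i) (stdB j) (stdB k)
  simp only [bform, mulVec_apply_fin_seven]
  -- each `E i j k` is a linear relation among the entries of `X`; this combination of them was
  -- found by solving that linear system
  linear_combination (norm := skip)
    (u 0 * v 0) * (√2 * E 0 1 2 + (-X 4 0) * hs) +
    (u 0 * v 1 + u 1 * v 0) * (-E 0 1 3) +
    (u 0 * v 2 + u 2 * v 0) * (-E 0 2 3) +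
    (u 0 * v 3 + u 3 * v 0) * ((-1/2) * E 0 1 5 + (-1/2) * E 0 2 6 + (1/2) * √2 * E 1 2 3 +
      ((-1/2) * X 4 3) * hs) +
    (u 0 * v 4 + u 4 * v 0) * ((2/3) * E 0 3 4 + (1/6) * √2 * E 0 5 6 + (1/6) * √2 * E 1 2 4 +
      (1/3) * E 1 3 5 + (1/3) * E 2 3 6 + ((-1/6) * X 0 0 + (-1/6) * X 4 4 + (-1/6) * X 5 5 +
      (-1/6) * X 6 6 + (-1/6) * X 1 1 + (-1/6) * X 2 2) * hs) +
    (u 0 * v 5 + u 5 * v 0) * ((1/2) * √2 * E 0 2 4 + (1/2) * √2 * E 1 2 5 + ((-1/2) * X 1 0 +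
      (-1/2) * X 4 5) * hs) +
    (u 0 * v 6 + u 6 * v 0) * ((-1/2) * √2 * E 0 1 4 + (1/2) * √2 * E 1 2 6 + ((-1/2) * X 2 0 +
      (-1/2) * X 4 6) * hs) +
    (u 1 * v 1) * (√2 * E 0 1 6 + (-X 5 1) * hs) +
    (u 1 * v 2 + u 2 * v 1) * ((-1/2) * √2 * E 0 1 5 + (1/2) * √2 * E 0 2 6 + ((-1/2) * X 6 1 +
      (-1/2) * X 5 2) * hs) +
    (u 1 * v 3 + u 3 * v 1) * ((-1/2) * E 0 1 4 + (1/2) * √2 * E 0 3 6 + (-1/2) * E 1 2 6 +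
      ((-1/2) * X 5 3) * hs) +
    (u 1 * v 4 + u 4 * v 1) * ((1/2) * √2 * E 0 4 6 + (1/2) * √2 * E 1 5 6 + ((-1/2) * X 5 4 +
      (-1/2) * X 0 1) * hs) +
    (u 1 * v 5 + u 5 * v 1) * ((-1/3) * E 0 3 4 + (1/6) * √2 * E 0 5 6 + (1/6) * √2 * E 1 2 4 +
      (-2/3) * E 1 3 5 + (1/3) * E 2 3 6 + ((-1/6) * X 0 0 + (-1/6) * X 4 4 + (-1/6) * X 5 5 +
      (-1/6) * X 6 6 + (-1/6) * X 1 1 + (-1/6) * X 2 2) * hs) +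
    (u 1 * v 6 + u 6 * v 1) * (-E 1 3 6) +
    (u 2 * v 2) * (-√2 * E 0 2 5 + (-X 6 2) * hs) +
    (u 2 * v 3 + u 3 * v 2) * ((-1/2) * E 0 2 4 + (-1/2) * √2 * E 0 3 5 + (1/2) * E 1 2 5 +
      ((-1/2) * X 6 3) * hs) +
    (u 2 * v 4 + u 4 * v 2) * ((-1/2) * √2 * E 0 4 5 + (1/2) * √2 * E 2 5 6 + ((-1/2) * X 6 4 +
      (-1/2) * X 0 2) * hs) +
    (u 2 * v 5 + u 5 * v 2) * (-E 2 3 5) +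
    (u 2 * v 6 + u 6 * v 2) * ((-1/3) * E 0 3 4 + (1/6) * √2 * E 0 5 6 + (1/6) * √2 * E 1 2 4 +
      (1/3) * E 1 3 5 + (-2/3) * E 2 3 6 + ((-1/6) * X 0 0 + (-1/6) * X 4 4 + (-1/6) * X 5 5 +
      (-1/6) * X 6 6 + (-1/6) * X 1 1 + (-1/6) * X 2 2) * hs) +
    (u 3 * v 3) * ((-2/3) * E 0 3 4 + (1/3) * √2 * E 0 5 6 + (1/3) * √2 * E 1 2 4 + (2/3) * E 1 3 5 +
      (2/3) * E 2 3 6 + ((-1/3) * X 0 0 + (-1/3) * X 4 4 + (-1/3) * X 5 5 + (-1/3) * X 6 6 +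
      (-1/3) * X 1 1 + (-1/3) * X 2 2) * hs) +
    (u 3 * v 4 + u 4 * v 3) * ((1/2) * E 1 4 5 + (1/2) * E 2 4 6 + (1/2) * √2 * E 3 5 6 +
      ((-1/2) * X 0 3) * hs) +
    (u 3 * v 5 + u 5 * v 3) * ((1/2) * E 0 4 5 + (-1/2) * √2 * E 2 3 4 + (1/2) * E 2 5 6 +
      ((-1/2) * X 1 3) * hs) +
    (u 3 * v 6 + u 6 * v 3) * ((1/2) * E 0 4 6 + (1/2) * √2 * E 1 3 4 + (-1/2) * E 1 5 6 +
      ((-1/2) * X 2 3) * hs) +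
    (u 4 * v 4) * (√2 * E 4 5 6 + (-X 0 4) * hs) +
    (u 4 * v 5 + u 5 * v 4) * E 3 4 5 +
    (u 4 * v 6 + u 6 * v 4) * E 3 4 6 +
    (u 5 * v 5) * (√2 * E 2 4 5 + (-X 1 5) * hs) +
    (u 5 * v 6 + u 6 * v 5) * ((-1/2) * √2 * E 1 4 5 + (1/2) * √2 * E 2 4 6 + ((-1/2) * X 2 5 +
      (-1/2) * X 1 6) * hs) +
    (u 6 * v 6) * (-√2 * E 1 4 6 + (-X 2 6) * hs)
  simp only [omega0, wedge3, mulVec_stdB_apply, stdB_apply, Fin.reduceEq, reduceIte]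
  ring

section Invariance

variable {h : LieSubalgebra ℝ M7} {U W : Submodule ℝ V7}

lemma InvariantUnder.inf (hU : InvariantUnder h U) (hW : InvariantUnder h W) :
    InvariantUnder h (U ⊓ W) :=
  fun X hX _ hv => ⟨hU X hX _ hv.1, hW X hX _ hv.2⟩

lemma InvariantUnder.sup (hU : InvariantUnder h U) (hW : InvariantUnder h W) :
    InvariantUnder h (U ⊔ W) := by
  intro X hX _ hv
  obtain ⟨a, ha, b, hb, rfl⟩ := Submodule.mem_sup.1 hv
  rw [Matrix.mulVec_add]
  exact Submodule.add_mem_sup (hU X hX a ha) (hW X hX b hb)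

lemma InvariantUnder.orthogonal (hg2 : ∀ X ∈ h, inG2 X) (hU : InvariantUnder h U) :
    InvariantUnder h (bformBilin.orthogonal U) := by
  intro X hX x hx u hu
  have hXu : bform (X *ᵥ u) x = 0 := hx _ (hU X hX u hu)
  simpa [hXu] using (hg2 X hX).bform_skew u x

end Invariance

namespace IsIrreducibleSub

open LinearMap.BilinForm

variable {h : LieSubalgebra ℝ M7} {U W : Submodule ℝ V7}

lemma ne_top (hnotirr : ∃ U : Submodule ℝ V7, InvariantUnder h U ∧ U ≠ ⊥ ∧ U ≠ ⊤)
    (hU : IsIrreducibleSub h U) : U ≠ ⊤ := by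
  rintro rfl
  obtain ⟨W, hW, hW_bot, hW_top⟩ := hnotirr
  exact (hU.2.2 W hW le_top).elim hW_bot hW_top

lemma le_orthogonal_self (hg2 : ∀ X ∈ h, inG2 X) (hind : IsIndecomposable h)
    (hU : IsIrreducibleSub h U) (hU_top : U ≠ ⊤) : U ≤ bformBilin.orthogonal U := by
  obtain ⟨hU_inv, hU_bot, hU_min⟩ := hU
  rcases hU_min _ (hU_inv.inf (hU_inv.orthogonal hg2)) inf_le_left with hrad | hrad
  · exact absurd (isNondeg_iff_disjoint_orthogonal.2 (disjoint_iff.2 hrad))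
      (hind U hU_inv hU_bot hU_top)
  · exact inf_eq_left.1 hrad

lemma le_orthogonal (hg2 : ∀ X ∈ h, inG2 X) (hind : IsIndecomposable h)
    (hU : IsIrreducibleSub h U) (hW : IsIrreducibleSub h W)
    (hU_iso : U ≤ bformBilin.orthogonal U) (hW_iso : W ≤ bformBilin.orthogonal W) :
    U ≤ bformBilin.orthogonal W := by
  rcases hU.2.2 _ (hU.1.inf (hW.1.orthogonal hg2)) inf_le_left with hUW | hUW
  swap
  · exact inf_eq_left.1 hUW
  rcases hW.2.2 _ (hW.1.inf (hU.1.orthogonal hg2)) inf_le_left with hWU | hWU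
  swap
  · exact (le_orthogonal_comm bformBilin_isRefl).2 (inf_eq_left.1 hWU)
  exfalso
  have hUW' := disjoint_iff.2 hUW
  have hWU' := disjoint_iff.2 hWU
  refine hind (U ⊔ W) (hU.1.sup hW.1) (ne_bot_of_le_ne_bot hU.2.1 le_sup_left) ?_
    (isNondeg_iff_disjoint_orthogonal.2 (disjoint_sup_orthogonal_sup hU_iso hW_iso hUW' hWU'))
  intro htop
  have hdim := finrank_sup_eq_two_mul_of_disjoint_orthogonal hW_iso hUW' hWU'
  rw [htop, finrank_top, Module.finrank_fin_fun] at hdim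
  omega

end IsIrreducibleSub

/-- The socle of an indecomposable, non-irreducible subalgebra
`h ⊆ g₂*` is isotropic. -/
theorem stmt6 (h : LieSubalgebra ℝ M7) (hg2 : ∀ X ∈ h, inG2 X)
    (hind : IsIndecomposable h)
    (hnotirr : ∃ U : Submodule ℝ V7, InvariantUnder h U ∧ U ≠ ⊥ ∧ U ≠ ⊤) :
    IsIsotropic (socleV h) := by
  have hiso : ∀ U, IsIrreducibleSub h U → U ≤ bformBilin.orthogonal U := fun U hU =>
    hU.le_orthogonal_self hg2 hind (hU.ne_top hnotirr)
  rw [isIsotropic_iff_le_orthogonal]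
  exact LinearMap.BilinForm.sSup_le_orthogonal_sSup bformBilin_isRefl fun U hU W hW =>
    IsIrreducibleSub.le_orthogonal hg2 hind hU hW (hiso U hU) (hiso W hW)
end
end

section
/- Let R ∈ K(h^I), i.e. R : ℝ⁷ × ℝ⁷ → h^I is alternating bilinear and satisfies R(x,y)z + R(y,z)x + R(z,x)y = 0 for all x,y,z. Write R(e_i,e_j) = h(A^{ij}, v^{ij}, u^{ij}, y^{ij}) with A^{ij} ∈ gl(2,ℝ), v^{ij} ∈ ℝ, u^{ij}, y^{ij} ∈ ℝ². Then: (1) R(e₁,e_j) = 0 for all j ≠ 5, and R(e_i,e_j) = 0 for all i,j ∈ {2,3,4}; (2) tr A^{ij} = 0 whenever i < j and (i,j) ∉ {(5,6),(5,7)}; (3) R(e₁,e₅) = h(0, 0, 0, (tr A^{56}, tr A^{57})). -/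
noncomputable section

open scoped Matrix

attribute [local instance 100] LieRing.ofAssociativeRing

/-! Every element of `h^I` is skew for the form `⟨·,·⟩ = bform` of signature (4,3), so the
Bianchi identity yields pair symmetry `⟨R(x,y)z, w⟩ = ⟨R(z,w)x, y⟩`. Hence `R(x,y) = 0` as soon as
`⟨Xx, y⟩ = 0` for every `X ∈ h^I`, which gives (1). Since `⟨X e₁, e₅⟩ = tr A`, pair symmetry also
reads `tr A^{zw} = ⟨R(e₁,e₅)z, w⟩`. By Bianchi and (1), `tr A^{ij} = 0` for `i, j ≠ 5`; this forces
`R(e₁,e₅) = h(0,0,0,y)`, and reading off its remaining entries gives (2) and (3). -/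

theorem pair_symm_of_bianchi {ι 𝕜 : Type*} [Field 𝕜] [CharZero 𝕜] (T : ι → ι → ι → ι → 𝕜)
    (skew₁₂ : ∀ x y z w, T y x z w = -T x y z w) (skew₃₄ : ∀ x y z w, T x y w z = -T x y z w)
    (bianchi : ∀ x y z w, T x y z w + T y z x w + T z x y w = 0) (x y z w : ι) :
    T x y z w = T z w x y := by
  -- Milnor's octahedron: the four Bianchi identities below sum to this modulo antisymmetry
  have h : 2 * (T x y z w - T z w x y) = 0 := by
    linear_combination bianchi y z x w + bianchi z x w y + bianchi x w y z + bianchi w y z x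
      - skew₃₄ y z x w - skew₃₄ z w x y - skew₁₂ w x y z - skew₁₂ z w x y
      - skew₃₄ z x y w - skew₃₄ w y x z + skew₃₄ x y z w - skew₁₂ x y w z + skew₁₂ x w y z
      - skew₃₄ x w y z
  simpa [sub_eq_zero] using h

lemma bform_add_left (x x' y : V7) : bform (x + x') y = bform x y + bform x' y := by
  simp only [bform, Pi.add_apply]
  ring

lemma bform_neg_left (x y : V7) : bform (-x) y = -bform x y := by
  simp only [bform, Pi.neg_apply]
  ring

lemma bform_zero_left (y : V7) : bform 0 y = 0 := by
  simp [bform]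

lemma eq_zero_of_forall_bform_eq_zero {x : V7} (h : ∀ w, bform x w = 0) : x = 0 := by
  funext i
  fin_cases i
  · simpa [bform, stdB] using h (stdB 4)
  · simpa [bform, stdB] using h (stdB 5)
  · simpa [bform, stdB] using h (stdB 6)
  · simpa [bform, stdB] using h (stdB 3)
  · simpa [bform, stdB] using h (stdB 0)
  · simpa [bform, stdB] using h (stdB 1)
  · simpa [bform, stdB] using h (stdB 2)

lemma eq_zero_of_forall_bform_mulVec_eq_zero {X : M7} (h : ∀ z w, bform (X *ᵥ z) w = 0) :
    X = 0 :=
  Matrix.ext_iff_mulVec.2 fun z => by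
    rw [Matrix.zero_mulVec]
    exact eq_zero_of_forall_bform_eq_zero (h z)

lemma bform_mulVec_stdB_zero_stdB_four (X : M7) : bform (X *ᵥ stdB 0) (stdB 4) = X 0 0 := by
  simp [bform, stdB]

section Curvature

variable {S : Set M7} {R : V7 →ₗ[ℝ] V7 →ₗ[ℝ] M7}

lemma apply_swap_of_mem_curvSet (hR : R ∈ curvSet S) (x y : V7) : R y x = -R x y := by
  have h := hR.1 (x + y)
  simp only [map_add, LinearMap.add_apply, hR.1 x, hR.1 y, zero_add, add_zero] at h
  exact eq_neg_of_add_eq_zero_left h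

lemma bform_pair_symm_of_mem_curvSet
    (hS : ∀ X ∈ S, ∀ x z, bform (X *ᵥ x) z = -bform (X *ᵥ z) x) (hR : R ∈ curvSet S)
    (x y z w : V7) : bform (R x y *ᵥ z) w = bform (R z w *ᵥ x) y := by
  refine pair_symm_of_bianchi (fun x y z w => bform (R x y *ᵥ z) w) (fun x y z w => ?_)
    (fun x y z w => ?_) (fun x y z w => ?_) x y z w
  · rw [apply_swap_of_mem_curvSet hR, Matrix.neg_mulVec, bform_neg_left]
  · exact hS _ (hR.2.1 x y) w z
  · rw [← bform_add_left, ← bform_add_left, hR.2.2, bform_zero_left]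

lemma apply_eq_zero_of_mem_curvSet
    (hS : ∀ X ∈ S, ∀ x z, bform (X *ᵥ x) z = -bform (X *ᵥ z) x) (hR : R ∈ curvSet S)
    {x y : V7} (h : ∀ X ∈ S, bform (X *ᵥ x) y = 0) : R x y = 0 :=
  eq_zero_of_forall_bform_mulVec_eq_zero fun z w => by
    rw [bform_pair_symm_of_mem_curvSet hS hR]
    exact h _ (hR.2.1 z w)

end Curvature

lemma bform_hImat_mulVec_antisymm (A : M2) (v : ℝ) (u y : Fin 2 → ℝ) (x z : V7) :
    bform (hImat A v u y *ᵥ x) z = -bform (hImat A v u y *ᵥ z) x := by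
  simp only [bform, Matrix.mulVec, dotProduct, hImat, Matrix.of_apply, Matrix.cons_val',
    Matrix.cons_val_fin_one, Matrix.cons_val_zero, Fin.sum_univ_succ, Matrix.cons_val_succ,
    Fin.succ_zero_eq_one, Fin.succ_one_eq_two, Fin.reduceSucc, Finset.univ_unique,
    Fin.default_eq_zero, Finset.sum_singleton, Matrix.cons_val, Matrix.cons_val_one]
  ring

lemma hImat_zero_zero (A : M2) (v : ℝ) (u y : Fin 2 → ℝ) : hImat A v u y 0 0 = A.trace := by
  simp [hImat]

lemma bform_hImat_mulVec_stdB_zero (A : M2) (v : ℝ) (u y : Fin 2 → ℝ) {j : Fin 7} (hj : j ≠ 4) :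
    bform (hImat A v u y *ᵥ stdB 0) (stdB j) = 0 := by
  fin_cases j <;> simp_all [bform, hImat, stdB]

lemma bform_hImat_mulVec_stdB_of_mem {A : M2} {v : ℝ} {u y : Fin 2 → ℝ} {i j : Fin 7}
    (hi : i ∈ ({1, 2, 3} : Set (Fin 7))) (hj : j ∈ ({1, 2, 3} : Set (Fin 7))) :
    bform (hImat A v u y *ᵥ stdB i) (stdB j) = 0 := by
  simp only [Set.mem_insert_iff, Set.mem_singleton_iff] at hi hj
  rcases hi with rfl | rfl | rfl <;> rcases hj with rfl | rfl | rfl <;> simp [bform, hImat, stdB]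

lemma hImat_eq_of_bform_mulVec_stdB {A : M2} {v : ℝ} {u y : Fin 2 → ℝ}
    (h : ∀ i j : Fin 7, i ≠ 4 → j ≠ 4 → bform (hImat A v u y *ᵥ stdB i) (stdB j) = 0) :
    hImat A v u y = hImat 0 0 0 y := by
  have hA : A = 0 := by
    ext i j
    fin_cases i <;> fin_cases j
    · simpa [bform, hImat, stdB] using h 1 5
    · simpa [bform, hImat, stdB] using h 2 5
    · simpa [bform, hImat, stdB] using h 1 6
    · simpa [bform, hImat, stdB] using h 2 6
  have hu : u = 0 := by
    funext i
    fin_cases i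
    · simpa [bform, hImat, stdB, sqrt2] using h 3 5
    · simpa [bform, hImat, stdB, sqrt2] using h 3 6
  have hv : v = 0 := by simpa [bform, hImat, stdB] using h 6 5
  rw [hA, hu, hv]

lemma bform_mulVec_antisymm_of_mem_hIset :
    ∀ X ∈ hIset, ∀ x z : V7, bform (X *ᵥ x) z = -bform (X *ᵥ z) x := by
  rintro X ⟨A, v, u, y, rfl⟩
  exact bform_hImat_mulVec_antisymm A v u y

section CurvatureHI

variable {R : V7 →ₗ[ℝ] V7 →ₗ[ℝ] M7}

lemma curv_stdB_zero_eq_zero (hR : R ∈ curvSet hIset) {j : Fin 7} (hj : j ≠ 4) :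
    R (stdB 0) (stdB j) = 0 :=
  apply_eq_zero_of_mem_curvSet bform_mulVec_antisymm_of_mem_hIset hR <| by
    rintro X ⟨A, v, u, y, rfl⟩
    exact bform_hImat_mulVec_stdB_zero A v u y hj

lemma curv_stdB_eq_zero_of_mem (hR : R ∈ curvSet hIset) {i j : Fin 7}
    (hi : i ∈ ({1, 2, 3} : Set (Fin 7))) (hj : j ∈ ({1, 2, 3} : Set (Fin 7))) :
    R (stdB i) (stdB j) = 0 :=
  apply_eq_zero_of_mem_curvSet bform_mulVec_antisymm_of_mem_hIset hR <| by
    rintro X ⟨A, v, u, y, rfl⟩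
    exact bform_hImat_mulVec_stdB_of_mem hi hj

lemma curv_stdB_zero_zero_eq_zero (hR : R ∈ curvSet hIset) {i j : Fin 7} (hi : i ≠ 4)
    (hj : j ≠ 4) : R (stdB i) (stdB j) 0 0 = 0 := by
  have h := hR.2.2 (stdB i) (stdB j) (stdB 0)
  rw [apply_swap_of_mem_curvSet hR (stdB 0) (stdB j), curv_stdB_zero_eq_zero hR hi,
    curv_stdB_zero_eq_zero hR hj] at h
  simpa [stdB] using congrFun h 0

lemma bform_curv_stdB_zero_stdB_four_mulVec (hR : R ∈ curvSet hIset) (z w : V7) :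
    bform (R (stdB 0) (stdB 4) *ᵥ z) w = R z w 0 0 := by
  rw [bform_pair_symm_of_mem_curvSet bform_mulVec_antisymm_of_mem_hIset hR,
    bform_mulVec_stdB_zero_stdB_four]

lemma curv_stdB_zero_stdB_four (hR : R ∈ curvSet hIset) :
    R (stdB 0) (stdB 4) = hImat 0 0 0 ![R (stdB 4) (stdB 5) 0 0, R (stdB 4) (stdB 6) 0 0] := by
  obtain ⟨A, v, u, y, hX⟩ := hR.2.1 (stdB 0) (stdB 4)
  have h0 : hImat A v u y = hImat 0 0 0 y := hImat_eq_of_bform_mulVec_stdB fun i j hi hj => by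
    rw [← hX, bform_curv_stdB_zero_stdB_four_mulVec hR]
    exact curv_stdB_zero_zero_eq_zero hR hi hj
  have hy : y = ![R (stdB 4) (stdB 5) 0 0, R (stdB 4) (stdB 6) 0 0] := by
    funext k
    fin_cases k
    · show y 0 = R (stdB 4) (stdB 5) 0 0
      rw [← bform_curv_stdB_zero_stdB_four_mulVec hR, hX, h0]
      simp [bform, hImat, stdB]
    · show y 1 = R (stdB 4) (stdB 6) 0 0
      rw [← bform_curv_stdB_zero_stdB_four_mulVec hR, hX, h0]
      simp [bform, hImat, stdB]
  rw [hX, h0, hy]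

lemma curv_stdB_stdB_four_zero_zero_eq_zero (hR : R ∈ curvSet hIset) {i : Fin 7} (hi : i < 4) :
    R (stdB i) (stdB 4) 0 0 = 0 := by
  rw [← bform_curv_stdB_zero_stdB_four_mulVec hR, curv_stdB_zero_stdB_four hR]
  fin_cases i <;> simp_all [bform, hImat, stdB]

end CurvatureHI

/-- Indices are 0-based: `e₁,…,e₇` of the paper are `stdB 0,…,stdB 6`. -/
theorem stmt10 (R : V7 →ₗ[ℝ] V7 →ₗ[ℝ] M7) (hR : R ∈ curvSet hIset) :
    (∀ j : Fin 7, j ≠ 4 → R (stdB 0) (stdB j) = 0) ∧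
    (∀ i j : Fin 7, i ∈ ({1, 2, 3} : Set (Fin 7)) → j ∈ ({1, 2, 3} : Set (Fin 7)) →
      R (stdB i) (stdB j) = 0) ∧
    (∀ (i j : Fin 7) (A : M2) (v : ℝ) (u y : Fin 2 → ℝ), i < j →
      (i, j) ≠ ((4 : Fin 7), (5 : Fin 7)) → (i, j) ≠ ((4 : Fin 7), (6 : Fin 7)) →
      R (stdB i) (stdB j) = hImat A v u y → A.trace = 0) ∧
    (∀ (A56 : M2) (v56 : ℝ) (u56 y56 : Fin 2 → ℝ)
       (A57 : M2) (v57 : ℝ) (u57 y57 : Fin 2 → ℝ),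
      R (stdB 4) (stdB 5) = hImat A56 v56 u56 y56 →
      R (stdB 4) (stdB 6) = hImat A57 v57 u57 y57 →
      R (stdB 0) (stdB 4) = hImat 0 0 0 ![A56.trace, A57.trace]) := by
  refine ⟨fun j => curv_stdB_zero_eq_zero hR, fun i j => curv_stdB_eq_zero_of_mem hR, ?_, ?_⟩
  · intro i j A v u y hij h45 h46 h
    rw [← hImat_zero_zero A v u y, ← h]
    by_cases hi : i = 4
    · subst hi
      fin_cases j <;> simp_all
    by_cases hj : j = 4
    · subst hj
      exact curv_stdB_stdB_four_zero_zero_eq_zero hR hij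
    exact curv_stdB_zero_zero_eq_zero hR hi hj
  · intro A56 v56 u56 y56 A57 v57 u57 y57 h56 h57
    rw [curv_stdB_zero_stdB_four hR, h56, h57, hImat_zero_zero, hImat_zero_zero]
end
end

section
/- Let r, r̂ ∈ [0,2). If the polynomials xy(x² + rxy + y²) and xy(x² + r̂xy + y²) in P₄ are projectively equivalent, then r = r̂. -/
noncomputable section

open scoped Matrix

attribute [local instance 100] LieRing.ofAssociativeRing

/-!
A real linear substitution maps the real zeros of one quartic onto those of the other. For
`r² < 4` the factor `x² + rxy + y²` is definite, so the real zeros of `xy(x² + rxy + y²)` are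
the two coordinate axes; hence the substitution is diagonal or antidiagonal, and by the
`x ↔ y` symmetry it suffices to treat `(x, y) ↦ (ax, dy)`. Comparing coefficients then forces
`a² = d²` and `r(ad)² = a³d·r̂`, so `r² = r̂²`.
-/

theorem eval_polyAct (A : M2) (p : Poly2) (v : Fin 2 → ℝ) :
    MvPolynomial.eval v (polyAct A p) =
      MvPolynomial.eval (fun i => A 0 i * v 0 + A 1 i * v 1) p := by
  induction p using MvPolynomial.induction_on <;> simp_all [polyAct, Px, Py]

def quartic (r x y : ℝ) : ℝ := x * y * (x ^ 2 + r * x * y + y ^ 2)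

theorem eval_quartic (r : ℝ) (v : Fin 2 → ℝ) :
    MvPolynomial.eval v (Px * Py * (Px ^ 2 + MvPolynomial.C r * Px * Py + Py ^ 2)) =
      quartic r (v 0) (v 1) := by
  simp [Px, Py, quartic]

theorem quartic_comm (r x y : ℝ) : quartic r x y = quartic r y x := by
  unfold quartic; ring

theorem quartic_eq_zero {r x y : ℝ} (hr : r ^ 2 < 4) (h : quartic r x y = 0) :
    x = 0 ∨ y = 0 := by
  rcases mul_eq_zero.mp h with hxy | hq
  · exact mul_eq_zero.mp hxy
  · right
    have : (4 - r ^ 2) * y ^ 2 = 0 := by nlinarith [sq_nonneg (2 * x + r * y), sq_nonneg y]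
    simpa [(by linarith : (4 : ℝ) - r ^ 2 ≠ 0)] using this

theorem sq_eq_sq_of_quartic_scale {r rh a d c : ℝ} (had : a * d ≠ 0)
    (h : ∀ x y, quartic r (a * x) (d * y) = c * quartic rh x y) : r ^ 2 = rh ^ 2 := by
  have h11 := h 1 1
  have h1m := h 1 (-1)
  have h12 := h 1 2
  simp only [quartic] at h11 h1m h12
  have hx4 : a * d * a ^ 2 = c := by linear_combination h11 - (1/3) * h1m - (1/6) * h12
  have hy4 : a * d * d ^ 2 = c := by linear_combination (-1/2) * h11 - (1/6) * h1m + (1/6) * h12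
  have hmid : r * (a * d) ^ 2 = c * rh := by linear_combination (1/2) * h11 + (1/2) * h1m
  have had2 : a ^ 2 = d ^ 2 := by
    have : a * d * (a ^ 2 - d ^ 2) = 0 := by linear_combination hx4 - hy4
    linear_combination (mul_eq_zero.mp this).resolve_left had
  have : (a * d) ^ 4 * (r ^ 2 - rh ^ 2) = 0 := by
    linear_combination (r * (a * d) ^ 2 + c * rh) * hmid - (c + a ^ 3 * d) * rh ^ 2 * hx4
      + rh ^ 2 * a ^ 4 * d ^ 2 * had2
  linear_combination (mul_eq_zero.mp this).resolve_left (pow_ne_zero 4 had)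

theorem sq_eq_sq_of_projEquiv_quartic {r rh : ℝ} (hr : r ^ 2 < 4)
    (h : ProjEquiv (Px * Py * (Px ^ 2 + MvPolynomial.C r * Px * Py + Py ^ 2))
      (Px * Py * (Px ^ 2 + MvPolynomial.C rh * Px * Py + Py ^ 2))) :
    r ^ 2 = rh ^ 2 := by
  obtain ⟨A, hA, c, -, hpoly⟩ := h
  have hev (x y : ℝ) :
      quartic r (A 0 0 * x + A 1 0 * y) (A 0 1 * x + A 1 1 * y) = c * quartic rh x y := by
    simpa [eval_polyAct, eval_quartic] using congrArg (MvPolynomial.eval ![x, y]) hpoly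
  have hdet : A 0 0 * A 1 1 - A 0 1 * A 1 0 ≠ 0 := by
    simpa [Matrix.det_fin_two] using ((Matrix.isUnit_iff_isUnit_det A).mp hA).ne_zero
  have hrow0 : A 0 0 = 0 ∨ A 0 1 = 0 := quartic_eq_zero hr (by simpa [quartic] using hev 1 0)
  have hrow1 : A 1 0 = 0 ∨ A 1 1 = 0 := quartic_eq_zero hr (by simpa [quartic] using hev 0 1)
  rcases hrow0 with h00 | h01 <;> rcases hrow1 with h10 | h11
  · simp [h00, h10] at hdet
  · refine sq_eq_sq_of_quartic_scale (a := A 0 1) (d := A 1 0) (c := c)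
      (by simpa [h00, h11] using hdet) fun x y => ?_
    simpa [h00, h11, quartic_comm r (A 0 1 * x)] using hev x y
  · exact sq_eq_sq_of_quartic_scale (by simpa [h01, h10] using hdet)
      (by simpa [h01, h10] using hev)
  · simp [h01, h11] at hdet

/-- for `r, r̂ ∈ [0,2)`, projective equivalence of
`xy(x² + rxy + y²)` and `xy(x² + r̂xy + y²)` forces `r = r̂`. -/
theorem stmt17 (r rh : ℝ) (hr : r ∈ Set.Ico (0 : ℝ) 2) (hrh : rh ∈ Set.Ico (0 : ℝ) 2)
    (heq : ProjEquiv (Px * Py * (Px ^ 2 + MvPolynomial.C r * Px * Py + Py ^ 2))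
      (Px * Py * (Px ^ 2 + MvPolynomial.C rh * Px * Py + Py ^ 2))) :
    r = rh :=
  (sq_eq_sq₀ hr.1 hrh.1).mp
    (sq_eq_sq_of_projEquiv_quartic (by nlinarith [hr.1, hr.2]) heq)
end
end
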